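/- Negative identity expansion: for every negative proposition A⁻, if Γ ; · ⊢ ⟨A⁻⟩ is derivable in the focused sequent calculus for polarized intuitionistic logic, then Γ ; · ⊢ A⁻ is derivable. The proof is by structural induction on A⁻, mutually with positive identity expansion, using focal substitution. -/

import Mathlib

/-!
Identity expansion is proved by induction on the proposition. The invertible rules for the
outermost connective of `A` decompose it; the suspension `⟨A⟩` is then discharged by focal
substitution against a focused proof of `A` (or a left-focused use of `A`) built from suspensions
of its immediate subformulas, which the induction hypothesis expands in turn. The shifts `↓` and
`↑` are where the two polarities call each other. Focal substitution is a routine induction on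
derivations, because suspended propositions are consumed only by the rules `id⁺` and `id⁻`.
-/

namespace StructuralFocalization

/- Polarized propositional intuitionistic logic -/
mutual
inductive PProp : Type
  | atom : Nat → PProp
  | down : NProp → PProp
  | bot  : PProp
  | or   : PProp → PProp → PProp
  | top  : PProp
  | and  : PProp → PProp → PProp
inductive NProp : Type
  | atom : Nat → NProp
  | up   : PProp → NProp
  | imp  : PProp → NProp → NProp
  | top  : NProp
  | and  : NProp → NProp → NProp
end

/- Hypotheses: negative propositions or suspended positives ⟨A⁺⟩ -/
inductive Hyp : Type
  | neg  : NProp → Hyp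
  | susp : PProp → Hyp

/- Succedents: A⁺, A⁻, or suspended ⟨A⁻⟩ -/
inductive Succ : Type
  | pos  : PProp → Succ
  | neg  : NProp → Succ
  | susp : NProp → Succ

abbrev Ctx := List Hyp

def Succ.stable : Succ → Prop
  | .pos _ => True
  | .susp _ => True
  | .neg _ => False

def Hyp.suspNormal : Hyp → Prop
  | .susp (PProp.atom _) => True
  | .susp _ => False
  | .neg _ => True

def Ctx.suspNormal (Γ : Ctx) : Prop := ∀ h ∈ Γ, h.suspNormal

def Succ.suspNormal : Succ → Prop
  | .susp (NProp.atom _) => True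
  | .susp _ => False
  | _ => True

/- The focused sequent calculus (Figures 3 and 4 of "Structural focalization",
   with the generalized id⁺/id⁻ rules for arbitrary suspended propositions). -/
mutual
/-- Right focus: Γ ⊢ [A⁺] -/
inductive RFoc : Ctx → PProp → Prop
  | idP {Γ A} : Hyp.susp A ∈ Γ → RFoc Γ A
  | downR {Γ A} : Inv Γ [] (Succ.neg A) → RFoc Γ (PProp.down A)
  | orR1 {Γ A B} : RFoc Γ A → RFoc Γ (PProp.or A B)
  | orR2 {Γ A B} : RFoc Γ B → RFoc Γ (PProp.or A B)
  | topR {Γ} : RFoc Γ PProp.top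
  | andR {Γ A B} : RFoc Γ A → RFoc Γ B → RFoc Γ (PProp.and A B)
/-- Inversion: Γ ; Ω ⊢ U -/
inductive Inv : Ctx → List PProp → Succ → Prop
  | focR {Γ A} : RFoc Γ A → Inv Γ [] (Succ.pos A)
  | focL {Γ A U} : Hyp.neg A ∈ Γ → Succ.stable U → LFoc Γ A U → Inv Γ [] U
  | etaP {Γ p Ω U} : Inv (Hyp.susp (PProp.atom p) :: Γ) Ω U → Inv Γ (PProp.atom p :: Ω) U
  | downL {Γ A Ω U} : Inv (Hyp.neg A :: Γ) Ω U → Inv Γ (PProp.down A :: Ω) U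
  | botL {Γ Ω U} : Inv Γ (PProp.bot :: Ω) U
  | orL {Γ A B Ω U} : Inv Γ (A :: Ω) U → Inv Γ (B :: Ω) U → Inv Γ (PProp.or A B :: Ω) U
  | topPL {Γ Ω U} : Inv Γ Ω U → Inv Γ (PProp.top :: Ω) U
  | andPL {Γ A B Ω U} : Inv Γ (A :: B :: Ω) U → Inv Γ (PProp.and A B :: Ω) U
  | etaN {Γ p} : Inv Γ [] (Succ.susp (NProp.atom p)) → Inv Γ [] (Succ.neg (NProp.atom p))
  | upR {Γ A} : Inv Γ [] (Succ.pos A) → Inv Γ [] (Succ.neg (NProp.up A))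
  | impR {Γ A B} : Inv Γ [A] (Succ.neg B) → Inv Γ [] (Succ.neg (NProp.imp A B))
  | topNR {Γ} : Inv Γ [] (Succ.neg NProp.top)
  | andNR {Γ A B} : Inv Γ [] (Succ.neg A) → Inv Γ [] (Succ.neg B) →
      Inv Γ [] (Succ.neg (NProp.and A B))
/-- Left focus: Γ ; [A⁻] ⊢ U -/
inductive LFoc : Ctx → NProp → Succ → Prop
  | idN {Γ A} : LFoc Γ A (Succ.susp A)
  | upL {Γ A U} : Inv Γ [A] U → LFoc Γ (NProp.up A) U
  | impL {Γ A B U} : RFoc Γ A → LFoc Γ B U → LFoc Γ (NProp.imp A B) U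
  | andL1 {Γ A B U} : LFoc Γ A U → LFoc Γ (NProp.and A B) U
  | andL2 {Γ A B U} : LFoc Γ B U → LFoc Γ (NProp.and A B) U
end

/- Unpolarized propositions and Kleene's G3 -/
inductive UProp : Type
  | atom : Nat → UProp
  | bot  : UProp
  | or   : UProp → UProp → UProp
  | top  : UProp
  | and  : UProp → UProp → UProp
  | imp  : UProp → UProp → UProp

inductive G3 : List UProp → UProp → Prop
  | init {Γ p} : UProp.atom p ∈ Γ → G3 Γ (UProp.atom p)
  | botL {Γ Q} : UProp.bot ∈ Γ → G3 Γ Q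
  | orR1 {Γ A B} : G3 Γ A → G3 Γ (UProp.or A B)
  | orR2 {Γ A B} : G3 Γ B → G3 Γ (UProp.or A B)
  | orL {Γ A B Q} : UProp.or A B ∈ Γ → G3 (A :: Γ) Q → G3 (B :: Γ) Q → G3 Γ Q
  | topR {Γ} : G3 Γ UProp.top
  | andR {Γ A B} : G3 Γ A → G3 Γ B → G3 Γ (UProp.and A B)
  | andL1 {Γ A B Q} : UProp.and A B ∈ Γ → G3 (A :: Γ) Q → G3 Γ Q
  | andL2 {Γ A B Q} : UProp.and A B ∈ Γ → G3 (B :: Γ) Q → G3 Γ Q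
  | impR {Γ A B} : G3 (A :: Γ) B → G3 Γ (UProp.imp A B)
  | impL {Γ A B Q} : UProp.imp A B ∈ Γ → G3 Γ A → G3 (B :: Γ) Q → G3 Γ Q

/-- G3 with an ordered auxiliary context Ψ: Γ; Ψ ⊢ Q -/
inductive G3Psi : List UProp → List UProp → UProp → Prop
  | cons {Γ P Ψ Q} : G3Psi (P :: Γ) Ψ Q → G3Psi Γ (P :: Ψ) Q
  | nil {Γ Q} : G3 Γ Q → G3Psi Γ [] Q

/- Erasure -/
mutual
def eraseP : PProp → UProp
  | .atom p => .atom p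
  | .down A => eraseN A
  | .bot => .bot
  | .or A B => .or (eraseP A) (eraseP B)
  | .top => .top
  | .and A B => .and (eraseP A) (eraseP B)
def eraseN : NProp → UProp
  | .atom p => .atom p
  | .up A => eraseP A
  | .imp A B => .imp (eraseP A) (eraseN B)
  | .top => .top
  | .and A B => .and (eraseN A) (eraseN B)
end

def eraseHyp : Hyp → UProp
  | .neg A => eraseN A
  | .susp A => eraseP A

def eraseCtx (Γ : Ctx) : List UProp := Γ.map eraseHyp

def eraseSucc : Succ → UProp
  | .pos A => eraseP A
  | .neg A => eraseN A
  | .susp A => eraseN A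

theorem _root_.List.cons_subset_cons_cons {α : Type*} {x y : α} {l l' : List α}
    (h : l ⊆ y :: l') : x :: l ⊆ y :: x :: l' :=
  List.Subset.trans (List.cons_subset_cons x h) (List.Perm.swap y x l').subset

mutual
theorem RFoc.weaken {Γ Δ : Ctx} {A : PProp} (hΓΔ : Γ ⊆ Δ) : RFoc Γ A → RFoc Δ A
  | .idP h => .idP (hΓΔ h)
  | .downR d => .downR (d.weaken hΓΔ)
  | .orR1 d => .orR1 (d.weaken hΓΔ)
  | .orR2 d => .orR2 (d.weaken hΓΔ)
  | .topR => .topR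
  | .andR d e => .andR (d.weaken hΓΔ) (e.weaken hΓΔ)

theorem Inv.weaken {Γ Δ : Ctx} {Ω : List PProp} {U : Succ} (hΓΔ : Γ ⊆ Δ) :
    Inv Γ Ω U → Inv Δ Ω U
  | .focR d => .focR (d.weaken hΓΔ)
  | .focL h hU d => .focL (hΓΔ h) hU (d.weaken hΓΔ)
  | .etaP d => .etaP (d.weaken (List.cons_subset_cons _ hΓΔ))
  | .downL d => .downL (d.weaken (List.cons_subset_cons _ hΓΔ))
  | .botL => .botL
  | .orL d e => .orL (d.weaken hΓΔ) (e.weaken hΓΔ)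
  | .topPL d => .topPL (d.weaken hΓΔ)
  | .andPL d => .andPL (d.weaken hΓΔ)
  | .etaN d => .etaN (d.weaken hΓΔ)
  | .upR d => .upR (d.weaken hΓΔ)
  | .impR d => .impR (d.weaken hΓΔ)
  | .topNR => .topNR
  | .andNR d e => .andNR (d.weaken hΓΔ) (e.weaken hΓΔ)

theorem LFoc.weaken {Γ Δ : Ctx} {A : NProp} {U : Succ} (hΓΔ : Γ ⊆ Δ) :
    LFoc Γ A U → LFoc Δ A U
  | .idN => .idN
  | .upL d => .upL (d.weaken hΓΔ)
  | .impL d e => .impL (d.weaken hΓΔ) (e.weaken hΓΔ)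
  | .andL1 d => .andL1 (d.weaken hΓΔ)
  | .andL2 d => .andL2 (d.weaken hΓΔ)
end

-- The subset form absorbs the exchange needed under `etaP` and `downL`.
mutual
theorem RFoc.subst_of_subset {Γ Δ : Ctx} {A B : PProp} :
    RFoc Γ B → Γ ⊆ Hyp.susp A :: Δ → RFoc Δ A → RFoc Δ B
  | .idP h, hΓ, dA =>
      match List.mem_cons.1 (hΓ h) with
      | .inl e => Hyp.susp.inj e ▸ dA
      | .inr h => .idP h
  | .downR d, hΓ, dA => .downR (d.subst_of_subset hΓ dA)
  | .orR1 d, hΓ, dA => .orR1 (d.subst_of_subset hΓ dA)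
  | .orR2 d, hΓ, dA => .orR2 (d.subst_of_subset hΓ dA)
  | .topR, _, _ => .topR
  | .andR d e, hΓ, dA => .andR (d.subst_of_subset hΓ dA) (e.subst_of_subset hΓ dA)

theorem Inv.subst_of_subset {Γ Δ : Ctx} {A : PProp} {Ω : List PProp} {U : Succ} :
    Inv Γ Ω U → Γ ⊆ Hyp.susp A :: Δ → RFoc Δ A → Inv Δ Ω U
  | .focR d, hΓ, dA => .focR (d.subst_of_subset hΓ dA)
  | .focL h hU d, hΓ, dA =>
      match List.mem_cons.1 (hΓ h) with
      | .inr h => .focL h hU (d.subst_of_subset hΓ dA)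
  | .etaP d, hΓ, dA =>
      .etaP <| d.subst_of_subset (List.cons_subset_cons_cons hΓ) <|
        dA.weaken (List.subset_cons_self _ _)
  | .downL d, hΓ, dA =>
      .downL <| d.subst_of_subset (List.cons_subset_cons_cons hΓ) <|
        dA.weaken (List.subset_cons_self _ _)
  | .botL, _, _ => .botL
  | .orL d e, hΓ, dA => .orL (d.subst_of_subset hΓ dA) (e.subst_of_subset hΓ dA)
  | .topPL d, hΓ, dA => .topPL (d.subst_of_subset hΓ dA)
  | .andPL d, hΓ, dA => .andPL (d.subst_of_subset hΓ dA)
  | .etaN d, hΓ, dA => .etaN (d.subst_of_subset hΓ dA)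
  | .upR d, hΓ, dA => .upR (d.subst_of_subset hΓ dA)
  | .impR d, hΓ, dA => .impR (d.subst_of_subset hΓ dA)
  | .topNR, _, _ => .topNR
  | .andNR d e, hΓ, dA => .andNR (d.subst_of_subset hΓ dA) (e.subst_of_subset hΓ dA)

theorem LFoc.subst_of_subset {Γ Δ : Ctx} {A : PProp} {B : NProp} {U : Succ} :
    LFoc Γ B U → Γ ⊆ Hyp.susp A :: Δ → RFoc Δ A → LFoc Δ B U
  | .idN, _, _ => .idN
  | .upL d, hΓ, dA => .upL (d.subst_of_subset hΓ dA)
  | .impL d e, hΓ, dA => .impL (d.subst_of_subset hΓ dA) (e.subst_of_subset hΓ dA)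
  | .andL1 d, hΓ, dA => .andL1 (d.subst_of_subset hΓ dA)
  | .andL2 d, hΓ, dA => .andL2 (d.subst_of_subset hΓ dA)
end

theorem Inv.subst_pos {Γ Δ : Ctx} {A : PProp} {Ω : List PProp} {U : Succ}
    (d : Inv (Hyp.susp A :: Γ) Ω U) (hΓΔ : Γ ⊆ Δ) (dA : RFoc Δ A) : Inv Δ Ω U :=
  d.subst_of_subset (List.cons_subset_cons _ hΓΔ) dA

mutual
theorem Inv.subst_neg_of_eq {Γ : Ctx} {A : NProp} {Ω : List PProp} {U V : Succ} :
    Inv Γ Ω V → V = Succ.susp A → LFoc Γ A U → U.stable → Inv Γ Ω U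
  | .focL h _ d, hV, dA, hU => .focL h hU (d.subst_neg_of_eq hV dA hU)
  | .etaP d, hV, dA, hU =>
      .etaP (d.subst_neg_of_eq hV (dA.weaken (List.subset_cons_self _ _)) hU)
  | .downL d, hV, dA, hU =>
      .downL (d.subst_neg_of_eq hV (dA.weaken (List.subset_cons_self _ _)) hU)
  | .botL, _, _, _ => .botL
  | .orL d e, hV, dA, hU => .orL (d.subst_neg_of_eq hV dA hU) (e.subst_neg_of_eq hV dA hU)
  | .topPL d, hV, dA, hU => .topPL (d.subst_neg_of_eq hV dA hU)
  | .andPL d, hV, dA, hU => .andPL (d.subst_neg_of_eq hV dA hU)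
  | .focR _, hV, _, _ | .etaN _, hV, _, _ | .upR _, hV, _, _ | .impR _, hV, _, _
  | .topNR, hV, _, _ | .andNR _ _, hV, _, _ => nomatch hV

theorem LFoc.subst_neg_of_eq {Γ : Ctx} {A B : NProp} {U V : Succ} :
    LFoc Γ B V → V = Succ.susp A → LFoc Γ A U → U.stable → LFoc Γ B U
  | .idN, hV, dA, _ => Succ.susp.inj hV ▸ dA
  | .upL d, hV, dA, hU => .upL (d.subst_neg_of_eq hV dA hU)
  | .impL d e, hV, dA, hU => .impL d (e.subst_neg_of_eq hV dA hU)
  | .andL1 d, hV, dA, hU => .andL1 (d.subst_neg_of_eq hV dA hU)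
  | .andL2 d, hV, dA, hU => .andL2 (d.subst_neg_of_eq hV dA hU)
end

theorem Inv.subst_neg {Γ : Ctx} {A : NProp} {Ω : List PProp} {U : Succ}
    (d : Inv Γ Ω (Succ.susp A)) (dA : LFoc Γ A U) (hU : U.stable) : Inv Γ Ω U :=
  d.subst_neg_of_eq rfl dA hU

mutual
theorem positive_identity_expansion :
    ∀ (A : PProp) {Γ : Ctx} {Ω : List PProp} {U : Succ},
      Inv (Hyp.susp A :: Γ) Ω U → Inv Γ (A :: Ω) U
  | .atom _, _, _, _, d => .etaP d
  | .down N, _, _, _, d =>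
      .downL <| d.subst_pos (List.subset_cons_self _ _) <| .downR <|
        negative_identity_expansion N _ (.focL List.mem_cons_self trivial .idN)
  | .bot, _, _, _, _ => .botL
  | .or A B, _, _, _, d =>
      .orL
        (positive_identity_expansion A <|
          d.subst_pos (List.subset_cons_self _ _) (.orR1 (.idP List.mem_cons_self)))
        (positive_identity_expansion B <|
          d.subst_pos (List.subset_cons_self _ _) (.orR2 (.idP List.mem_cons_self)))
  | .top, _, _, _, d => .topPL (d.subst_pos (List.Subset.refl _) .topR)
  | .and A B, _, _, _, d =>
      .andPL <| positive_identity_expansion A <| positive_identity_expansion B <|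
        d.subst_pos (by simp) (.andR (.idP (by simp)) (.idP List.mem_cons_self))

/-- Negative identity expansion. -/
theorem negative_identity_expansion :
    ∀ (A : NProp) (Γ : Ctx),
      Inv Γ [] (Succ.susp A) → Inv Γ [] (Succ.neg A)
  | .atom _, _, d => .etaN d
  | .up A, _, d =>
      .upR <| d.subst_neg (.upL <| positive_identity_expansion A <| .focR (.idP List.mem_cons_self))
        trivial
  | .imp A B, _, d =>
      .impR <| positive_identity_expansion A <| negative_identity_expansion B _ <|
        (d.weaken (List.subset_cons_self _ _)).subst_neg (.impL (.idP List.mem_cons_self) .idN)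
          trivial
  | .top, _, _ => .topNR
  | .and A B, _, d =>
      .andNR (negative_identity_expansion A _ (d.subst_neg (.andL1 .idN) trivial))
        (negative_identity_expansion B _ (d.subst_neg (.andL2 .idN) trivial))
end

end StructuralFocalization
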